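/- There is a bijection between cycle-colored permutations (π, μ) of {1,...,n} using colors from a set of x letters, and sequences a_1,...,a_n of pairwise distinct elements of the set X = {2,3,...,n} ∪ L, where L is a set of x letters disjoint from {1,...,n}. -/
import Mathlib


/-- The number of cycles of a permutation, counting fixed points as cycles. -/
def cycleCount {n : ℕ} (π : Equiv.Perm (Fin n)) : ℕ :=
  π.cycleType.card + (Finset.univ.filter fun a => π a = a).card

open Equiv

private lemma remove_aux {α : Type*} [DecidableEq α] {x : ℕ} (σ : Perm (Option α))
    (ν : Option α → Fin x) (h : ν ∘ σ = ν) :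
    (ν ∘ some) ∘ (removeNone σ) = ν ∘ some := by
  funext b
  cases hσ : σ (some b) with
  | none =>
      have h1 : some (removeNone σ b) = σ none := removeNone_none σ hσ
      have : ν (some (removeNone σ b)) = ν (σ none) := by rw [h1]
      calc ν (some (removeNone σ b)) = ν (σ none) := by rw [h1]
        _ = ν none := congrFun h none
        _ = ν (σ (some b)) := by rw [hσ]
        _ = ν (some b) := congrFun h (some b)
  | some c =>
      have h1 : some (removeNone σ b) = σ (some b) := removeNone_some σ ⟨c, hσ⟩
      calc ν (some (removeNone σ b)) = ν (σ (some b)) := by rw [h1]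
        _ = ν (some b) := congrFun h (some b)

/-- Decomposition of colored pairs on `Option α`. -/
def pairsOptionEquiv (α : Type*) [DecidableEq α] (x : ℕ) :
    {p : Perm (Option α) × (Option α → Fin x) // p.2 ∘ p.1 = p.2} ≃
      (α ⊕ Fin x) × {p : Perm α × (α → Fin x) // p.2 ∘ p.1 = p.2} where
  toFun := fun ⟨(σ, ν), h⟩ =>
    ((σ none).elim (Sum.inr (ν none)) Sum.inl,
      ⟨(removeNone σ, ν ∘ some), remove_aux σ ν h⟩)
  invFun := fun (s, ⟨(π, μ), h⟩) =>
    ⟨(Equiv.Perm.decomposeOption.symm (Sum.elim (fun a => some a) (fun _ => none) s, π),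
      fun o => o.elim (Sum.elim μ id s) μ), by
      funext o
      rcases s with a | c
      · -- s = inl a
        simp only [Sum.elim_inl]
        rcases o with _ | b
        · -- o = none : σ' none = some a
          have : Equiv.Perm.decomposeOption.symm ((some a : Option α), π) none = some a := by
            simp [Equiv.Perm.decomposeOption]
          simp [Function.comp, this]
        · have hb : Equiv.Perm.decomposeOption.symm ((some a : Option α), π) (some b)
              = Equiv.swap (none : Option α) (some a) (some (π b)) := by
            simp [Equiv.Perm.decomposeOption]
          by_cases hba : π b = a
          · rw [Function.comp_apply, hb, hba, Equiv.swap_apply_right]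
            show μ a = μ b
            rw [← hba]
            exact congrFun h b
          · have hne : (some (π b) : Option α) ≠ some a := by simpa using hba
            rw [Function.comp_apply, hb,
              Equiv.swap_apply_of_ne_of_ne (by simp) hne]
            simpa using congrFun h b
      · -- s = inr c
        simp only [Sum.elim_inr]
        rcases o with _ | b
        · have : Equiv.Perm.decomposeOption.symm ((none : Option α), π) none = none := by
            simp [Equiv.Perm.decomposeOption]
          simp [Function.comp, this]
        · have hb : Equiv.Perm.decomposeOption.symm ((none : Option α), π) (some b)
              = some (π b) := by
            simp [Equiv.Perm.decomposeOption]
          rw [Function.comp_apply, hb]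
          simpa using congrFun h b⟩
  left_inv := by
    rintro ⟨⟨σ, ν⟩, h⟩
    have hdec : Equiv.Perm.decomposeOption σ = (σ none, removeNone σ) := rfl
    cases hσ : σ none with
    | none =>
        refine Subtype.ext (Prod.ext ?_ ?_)
        · show Equiv.Perm.decomposeOption.symm _ = σ
          simp only [hσ, Option.elim]
          have := Equiv.Perm.decomposeOption.symm_apply_apply σ
          rw [hdec, hσ] at this
          exact this
        · funext o
          rcases o with _ | b
          · simp [hσ, Option.elim]
          · simp [hσ, Option.elim]
    | some a =>
        refine Subtype.ext (Prod.ext ?_ ?_)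
        · show Equiv.Perm.decomposeOption.symm _ = σ
          simp only [hσ, Option.elim]
          have := Equiv.Perm.decomposeOption.symm_apply_apply σ
          rw [hdec, hσ] at this
          exact this
        · funext o
          rcases o with _ | b
          · simp only [hσ, Option.elim, Sum.elim_inl, Function.comp_apply]
            calc ν (some a) = ν (σ none) := by rw [hσ]
              _ = ν none := congrFun h none
          · simp [hσ, Option.elim]
  right_inv := by
    rintro ⟨s, ⟨⟨π, μ⟩, h⟩⟩
    set t : Option α := Sum.elim (fun a => some a) (fun _ => none) s with ht
    have hdec : Equiv.Perm.decomposeOption (Equiv.Perm.decomposeOption.symm (t, π)) = (t, π) :=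
      Equiv.Perm.decomposeOption.apply_symm_apply _
    have h1 : (Equiv.Perm.decomposeOption.symm (t, π)) none = t := congrArg Prod.fst hdec
    have h2 : removeNone (Equiv.Perm.decomposeOption.symm (t, π)) = π := congrArg Prod.snd hdec
    rcases s with a | c
    · refine Prod.ext ?_ (Subtype.ext (Prod.ext ?_ ?_))
      · show ((Equiv.Perm.decomposeOption.symm (t, π)) none).elim
            (Sum.inr ((fun o => o.elim (Sum.elim μ id (Sum.inl a)) μ) none)) Sum.inl = Sum.inl a
        rw [h1, ht]; simp
      · exact h2
      · funext b; rfl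
    · refine Prod.ext ?_ (Subtype.ext (Prod.ext ?_ ?_))
      · show ((Equiv.Perm.decomposeOption.symm (t, π)) none).elim
            (Sum.inr ((fun o => o.elim (Sum.elim μ id (Sum.inr c)) μ) none)) Sum.inl = _
        rw [h1]; rfl
      · exact h2
      · funext b; rfl

/-- Transport of colored pairs along an equivalence. -/
def pairsCongr {α β : Type*} (e : α ≃ β) (x : ℕ) :
    {p : Perm α × (α → Fin x) // p.2 ∘ p.1 = p.2} ≃
      {p : Perm β × (β → Fin x) // p.2 ∘ p.1 = p.2} :=
  Equiv.subtypeEquiv ((Equiv.permCongr e).prodCongr (Equiv.arrowCongr e (Equiv.refl (Fin x))))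
    (by
      rintro ⟨π, μ⟩
      constructor
      · intro h
        funext b
        simpa using congrFun h (e.symm b)
      · intro h
        funext a
        have := congrFun h (e a)
        simpa using this)

lemma card_pairs (x : ℕ) : ∀ n : ℕ,
    Fintype.card {p : Perm (Fin n) × (Fin n → Fin x) // p.2 ∘ p.1 = p.2} = x.ascFactorial n
  | 0 => by
      rw [Fintype.card_congr (Equiv.subtypeUnivEquiv (fun p => Subsingleton.elim _ _))]
      simp [Nat.ascFactorial_zero]
  | n + 1 => by
      rw [Fintype.card_congr ((pairsCongr (finSuccEquiv n) x).trans (pairsOptionEquiv (Fin n) x)),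
        Fintype.card_prod, Fintype.card_sum, Fintype.card_fin, Fintype.card_fin,
        card_pairs x n, Nat.ascFactorial_succ]
      ring

theorem cycle_colored_bijection (n x : ℕ) (hn : 1 ≤ n) :
    Nonempty ({p : Equiv.Perm (Fin n) × (Fin n → Fin x) // p.2 ∘ p.1 = p.2} ≃
      (Fin n ↪ (Fin (n - 1) ⊕ Fin x))) := by
  rw [← Fintype.card_eq]
  rw [card_pairs, Fintype.card_embedding_eq, Fintype.card_sum, Fintype.card_fin, Fintype.card_fin,
    Fintype.card_fin]
  have : n - 1 + x = x + n - 1 := by omega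
  rw [this, Nat.add_descFactorial_eq_ascFactorial' x n]
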